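/- arXiv:2205.05275 — 4 statements merged into one kernel-verified Lean document; each statement's English description precedes it below -/
import Mathlib

section
/- Let G consist of a path graph on state nodes 1, 2, ..., n (edges between i and j iff |i−j| = 1) together with a single input node u adjacent to exactly one state node l. Then for every nonempty α ⊆ V_S \ {l}, the set N(α) \ α contains a dedicated node (a vertex with exactly one neighbor in α) if and only if l is a terminal node of the path (i.e., l = 1 or l = n). -/
open scoped Classical

/-- A vertex `v` is a *dedicated node* of `α` in `G` if `v ∉ α` and `v` has
exactly one neighbor in `α`. -/
def ded {V : Type} (G : SimpleGraph V) (α : Finset V) (v : V) : Prop :=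
  v ∉ α ∧ (α.filter (G.Adj v)).card = 1

/-- Path graph on state nodes `Fin n` (edges between consecutive nodes),
together with one input node (the `Sum.inr` vertex) adjacent exactly to the
state node `l`. -/
def pathInput (n : ℕ) (l : Fin n) : SimpleGraph (Fin n ⊕ Unit) :=
  SimpleGraph.fromRel (fun x y =>
    match x, y with
    | Sum.inl i, Sum.inl j => (i : ℕ) + 1 = (j : ℕ)
    | Sum.inr _, Sum.inl j => j = l
    | _, _ => False)

/-!
On the path, a state node outside `β` with exactly one neighbour in `β` is found just below `min β`
when `l = 0` (then `0 ∉ β`, so `min β - 1` exists) and just above `max β` when `l = n - 1`. If `l`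
is interior, take `β = V_S \ {l}`: the input node has no neighbour in `β`, and the only state node
outside `β` is `l`, whose two neighbours `l - 1` and `l + 1` both lie in `β`.
-/

open Finset

section Dedicated

variable {V : Type} {G : SimpleGraph V} {α : Finset V} {v : V}

lemma ded_of_adj_unique {m : V} (hv : v ∉ α) (hm : m ∈ α) (hvm : G.Adj v m)
    (huniq : ∀ b ∈ α, G.Adj v b → b = m) : ded G α v := by
  refine ⟨hv, card_eq_one.2 ⟨m, ?_⟩⟩
  ext b
  simp only [mem_filter, mem_singleton]
  exact ⟨fun ⟨hb, hvb⟩ => huniq b hb hvb, fun h => h ▸ ⟨hm, hvm⟩⟩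

lemma not_ded_of_adj_of_adj {a b : V} (ha : a ∈ α) (hb : b ∈ α) (hab : a ≠ b)
    (hva : G.Adj v a) (hvb : G.Adj v b) : ¬ ded G α v := fun h =>
  hab <| card_le_one.1 h.2.le a (mem_filter.2 ⟨ha, hva⟩) b (mem_filter.2 ⟨hb, hvb⟩)

end Dedicated

section PathInput

variable {n : ℕ} {l : Fin n} {β : Finset (Fin n)}

@[simp]
lemma pathInput_adj_inl_inl {a b : Fin n} :
    (pathInput n l).Adj (.inl a) (.inl b) ↔ (a : ℕ) + 1 = b ∨ (b : ℕ) + 1 = a := by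
  simp only [pathInput, SimpleGraph.fromRel_adj, ne_eq, Sum.inl.injEq, and_iff_right_iff_imp]
  rintro h rfl
  omega

@[simp]
lemma pathInput_adj_inr_inl {u : Unit} {b : Fin n} :
    (pathInput n l).Adj (.inr u) (.inl b) ↔ b = l := by
  simp [pathInput]

lemma not_ded_pathInput_inr (hl : l ∉ β) (u : Unit) :
    ¬ ded (pathInput n l) (β.image .inl) (.inr u) := by
  rintro ⟨-, h⟩
  obtain ⟨x, hx⟩ := card_pos.1 (h ▸ Nat.one_pos)
  obtain ⟨⟨b, hb, rfl⟩, hub⟩ := by simpa only [mem_filter, mem_image] using hx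
  exact hl (pathInput_adj_inr_inl.1 hub ▸ hb)

lemma ded_pathInput_inl_of_adj_unique {w m : Fin n} (hw : w ∉ β) (hm : m ∈ β)
    (hwm : (w : ℕ) + 1 = m ∨ (m : ℕ) + 1 = w)
    (huniq : ∀ b ∈ β, (w : ℕ) + 1 = b ∨ (b : ℕ) + 1 = w → b = m) :
    ded (pathInput n l) (β.image .inl) (.inl w) := by
  refine ded_of_adj_unique (by simpa using hw) (mem_image_of_mem _ hm)
    (pathInput_adj_inl_inl.2 hwm) ?_
  intro x hx hadj
  obtain ⟨b, hb, rfl⟩ := mem_image.1 hx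
  exact congrArg _ (huniq b hb (pathInput_adj_inl_inl.1 hadj))

lemma exists_ded_pathInput_of_val_eq_zero (hl : (l : ℕ) = 0) (hβ : β.Nonempty) (hlβ : l ∉ β) :
    ∃ v, ded (pathInput n l) (β.image .inl) v := by
  have hmin : ∀ b ∈ β, (β.min' hβ : ℕ) ≤ b := fun b hb => β.min'_le b hb
  obtain ⟨w, hw⟩ : ∃ w : Fin n, (w : ℕ) + 1 = β.min' hβ := by
    have : (β.min' hβ : ℕ) ≠ 0 := fun h => hlβ (Fin.ext (hl.trans h.symm) ▸ β.min'_mem hβ)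
    exact ⟨⟨β.min' hβ - 1, by omega⟩, by simp only; omega⟩
  refine ⟨.inl w, ded_pathInput_inl_of_adj_unique (fun hwβ => ?_) (β.min'_mem hβ) (.inl hw) ?_⟩
  · have := hmin w hwβ
    omega
  · intro b hb hadj
    have := hmin b hb
    exact Fin.ext (by omega)

lemma exists_ded_pathInput_of_val_eq_last (hl : (l : ℕ) = n - 1) (hβ : β.Nonempty)
    (hlβ : l ∉ β) : ∃ v, ded (pathInput n l) (β.image .inl) v := by
  have hmax : ∀ b ∈ β, (b : ℕ) ≤ β.max' hβ := fun b hb => β.le_max' b hb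
  obtain ⟨w, hw⟩ : ∃ w : Fin n, (β.max' hβ : ℕ) + 1 = w := by
    have : (β.max' hβ : ℕ) ≠ l := fun h => hlβ (Fin.ext h ▸ β.max'_mem hβ)
    exact ⟨⟨β.max' hβ + 1, by omega⟩, rfl⟩
  refine ⟨.inl w, ded_pathInput_inl_of_adj_unique (fun hwβ => ?_) (β.max'_mem hβ) (.inr hw) ?_⟩
  · have := hmax w hwβ
    omega
  · intro b hb hadj
    have := hmax b hb
    exact Fin.ext (by omega)

lemma not_exists_ded_pathInput_erase (hl0 : (l : ℕ) ≠ 0) (hl1 : (l : ℕ) ≠ n - 1) :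
    ¬ ∃ v, ded (pathInput n l) ((univ.erase l).image .inl) v := by
  rintro ⟨v | u, hv⟩
  · have hvl : v = l := by simpa using hv.1
    subst hvl
    obtain ⟨a, ha⟩ : ∃ a : Fin n, (a : ℕ) + 1 = v := ⟨⟨v - 1, by omega⟩, by simp only; omega⟩
    obtain ⟨b, hb⟩ : ∃ b : Fin n, (v : ℕ) + 1 = b := ⟨⟨v + 1, by omega⟩, rfl⟩
    refine not_ded_of_adj_of_adj (a := .inl a) (b := .inl b) ?_ ?_ ?_
      (pathInput_adj_inl_inl.2 (.inr ha)) (pathInput_adj_inl_inl.2 (.inl hb)) hv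
    · exact mem_image_of_mem _ (mem_erase.2 ⟨Fin.ne_of_val_ne (by omega), mem_univ a⟩)
    · exact mem_image_of_mem _ (mem_erase.2 ⟨Fin.ne_of_val_ne (by omega), mem_univ b⟩)
    · simp only [ne_eq, Sum.inl.injEq, Fin.ext_iff]; omega
  · exact not_ded_pathInput_inr (notMem_erase l univ) u hv

end PathInput

theorem stmt1_general (n : ℕ) (l : Fin n) :
    (∀ β : Finset (Fin n), β.Nonempty → l ∉ β →
        ∃ v, ded (pathInput n l) (β.image Sum.inl) v)
    ↔ ((l : ℕ) = 0 ∨ (l : ℕ) = n - 1) := by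
  constructor
  · intro H
    by_contra! hl
    have hβ : (univ.erase l).Nonempty := ⟨⟨0, by omega⟩, by simp [Fin.ext_iff, Ne.symm hl.1]⟩
    exact not_exists_ded_pathInput_erase hl.1 hl.2 (H _ hβ (notMem_erase l univ))
  · rintro (hl | hl) β hβ hlβ
    exacts [exists_ded_pathInput_of_val_eq_zero hl hβ hlβ,
      exists_ded_pathInput_of_val_eq_last hl hβ hlβ]

theorem stmt1 (n : ℕ) (hn : 2 ≤ n) (l : Fin n) :
    (∀ β : Finset (Fin n), β.Nonempty → l ∉ β →
        ∃ v, ded (pathInput n l) (β.image Sum.inl) v)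
    ↔ ((l : ℕ) = 0 ∨ (l : ℕ) = n - 1) :=
  stmt1_general n l
end

section
/- Let G be a path graph on state nodes 1,...,n (n ≥ 3) with one input node u adjacent to an interior node l (1 < l < n). Then taking α = V_S \ {l}, the set N(α) \ α equals {l}, and l is a sharing node of α (it has exactly two neighbors in α). Hence G is not strongly sign controllable. -/
open scoped Classical

/-!
The input node is adjacent only to `l`, so it has no neighbor in `α = V_S \ {l}`, while the
interior node `l` has both path neighbors `l - 1` and `l + 1` in `α`. Hence `l` is the only node
outside `α` with a neighbor in `α`, it has two of them, and `α` has no dedicated node.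
-/

open Finset

namespace pathInput

variable {n : ℕ} (l : Fin n)

lemma adj_inl_inl {i j : Fin n} :
    (pathInput n l).Adj (Sum.inl i) (Sum.inl j) ↔ (i : ℕ) + 1 = j ∨ (j : ℕ) + 1 = i := by
  simp only [pathInput, SimpleGraph.fromRel_adj, ne_eq, Sum.inl.injEq]
  constructor
  · exact And.right
  · intro h
    exact ⟨fun hij => by subst hij; omega, h⟩

lemma adj_inr_iff {u : Unit} {v : Fin n ⊕ Unit} :
    (pathInput n l).Adj (Sum.inr u) v ↔ v = Sum.inl l := by
  rcases v with j | u' <;> simp [pathInput]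

lemma filter_adj_inr_eq_empty {s : Finset (Fin n)} (hl : l ∉ s) (u : Unit) :
    (s.image Sum.inl).filter ((pathInput n l).Adj (Sum.inr u)) = ∅ := by
  ext v
  simp only [mem_filter, mem_image, adj_inr_iff, notMem_empty, iff_false, not_and]
  rintro ⟨i, hi, rfl⟩ hil
  exact hl (Sum.inl_injective hil ▸ hi)

lemma filter_adj_inl_eq_pair {i : Fin n} (hi0 : 0 < (i : ℕ)) (hi1 : (i : ℕ) + 1 < n) :
    ((univ.erase i).image Sum.inl).filter ((pathInput n l).Adj (Sum.inl i)) =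
      {Sum.inl ⟨i - 1, by omega⟩, Sum.inl ⟨i + 1, hi1⟩} := by
  ext v
  rcases v with j | u
  · simp only [mem_filter, mem_image, mem_erase, mem_univ, and_true, Sum.inl.injEq,
      exists_eq_right, adj_inl_inl, mem_insert, mem_singleton]
    simp only [ne_eq, Fin.ext_iff]
    omega
  · simp

lemma card_filter_adj_inl {i : Fin n} (hi0 : 0 < (i : ℕ)) (hi1 : (i : ℕ) + 1 < n) :
    (((univ.erase i).image Sum.inl).filter ((pathInput n l).Adj (Sum.inl i))).card = 2 := by
  rw [filter_adj_inl_eq_pair l hi0 hi1, card_pair]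
  simp only [ne_eq, Sum.inl.injEq, Fin.ext_iff]
  omega

lemma setOf_notMem_exists_adj_eq (hl0 : 0 < (l : ℕ)) (hl1 : (l : ℕ) + 1 < n) :
    {v | v ∉ (univ.erase l).image Sum.inl ∧
        ∃ w ∈ (univ.erase l).image Sum.inl, (pathInput n l).Adj v w} = {Sum.inl l} := by
  ext v
  simp only [← filter_nonempty_iff, Set.mem_ofPred_eq, Set.mem_singleton_iff]
  rcases v with i | u
  · simp only [mem_image, mem_erase, mem_univ, and_true, Sum.inl.injEq, exists_eq_right,
      not_not]
    constructor
    · exact And.left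
    · rintro ⟨⟩
      exact ⟨rfl, card_pos.mp (by rw [card_filter_adj_inl l hl0 hl1]; omega)⟩
  · simp [filter_adj_inr_eq_empty l (notMem_erase l univ)]

lemma not_exists_ded (hl0 : 0 < (l : ℕ)) (hl1 : (l : ℕ) + 1 < n) :
    ¬ ∃ v, ded (pathInput n l) ((univ.erase l).image Sum.inl) v := by
  rintro ⟨i | u, hv, hone⟩
  · obtain rfl : l = i := by simpa [eq_comm] using hv
    rw [card_filter_adj_inl l hl0 hl1] at hone
    omega
  · simp [filter_adj_inr_eq_empty l (notMem_erase l univ)] at hone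

end pathInput

theorem stmt2_general (n : ℕ) (l : Fin n)
    (hl0 : 0 < (l : ℕ)) (hl1 : (l : ℕ) < n - 1) :
    -- with α = V_S \ {l}:
    ({v : Fin n ⊕ Unit |
        v ∉ ((Finset.univ.erase l).image Sum.inl : Finset (Fin n ⊕ Unit)) ∧
        ∃ w ∈ ((Finset.univ.erase l).image Sum.inl : Finset (Fin n ⊕ Unit)),
          (pathInput n l).Adj v w}
      = {Sum.inl l}) ∧
    ((((Finset.univ.erase l).image Sum.inl : Finset (Fin n ⊕ Unit)).filter
        ((pathInput n l).Adj (Sum.inl l))).card = 2) ∧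
    (¬ ∃ v, ded (pathInput n l)
        ((Finset.univ.erase l).image Sum.inl : Finset (Fin n ⊕ Unit)) v) ∧
    -- hence G is not strongly sign controllable
    ¬ (∀ β : Finset (Fin n), β.Nonempty → l ∉ β →
        ∃ v, ded (pathInput n l) (β.image Sum.inl) v) := by
  have hl1' : (l : ℕ) + 1 < n := by omega
  have hnoded := pathInput.not_exists_ded l hl0 hl1'
  refine ⟨pathInput.setOf_notMem_exists_adj_eq l hl0 hl1',
    pathInput.card_filter_adj_inl l hl0 hl1', hnoded, fun h => hnoded ?_⟩
  exact h _ ⟨⟨l + 1, hl1'⟩, by simp [Fin.ext_iff]⟩ (notMem_erase l univ)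

theorem stmt2 (n : ℕ) (hn : 3 ≤ n) (l : Fin n)
    (hl0 : 0 < (l : ℕ)) (hl1 : (l : ℕ) < n - 1) :
    -- with α = V_S \ {l}:
    ({v : Fin n ⊕ Unit |
        v ∉ ((Finset.univ.erase l).image Sum.inl : Finset (Fin n ⊕ Unit)) ∧
        ∃ w ∈ ((Finset.univ.erase l).image Sum.inl : Finset (Fin n ⊕ Unit)),
          (pathInput n l).Adj v w}
      = {Sum.inl l}) ∧
    ((((Finset.univ.erase l).image Sum.inl : Finset (Fin n ⊕ Unit)).filter
        ((pathInput n l).Adj (Sum.inl l))).card = 2) ∧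
    (¬ ∃ v, ded (pathInput n l)
        ((Finset.univ.erase l).image Sum.inl : Finset (Fin n ⊕ Unit)) v) ∧
    -- hence G is not strongly sign controllable
    ¬ (∀ β : Finset (Fin n), β.Nonempty → l ∉ β →
        ∃ v, ded (pathInput n l) (β.image Sum.inl) v) :=
  stmt2_general n l hl0 hl1
end

section
/- Let G₁ and G₂ be two disjoint graphs, each consisting of state nodes with input nodes, and each strongly sign controllable: for every α_i ⊆ V_i^S \ N(V_i^I), the set N(α_i) \ α_i contains a dedicated node within G_i. Form G by adding exactly one bridge edge (k, l) with k ∈ V_1^S and l ∈ V_2^S. Then G is strongly sign controllable: for every α ⊆ (V_1^S ∪ V_2^S) \ N(V_1^I ∪ V_2^I), the set N(α) \ α contains a dedicated node, regardless of the choice of k and l. -/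
open scoped Classical

/-- Merge two graphs by a single bridge edge between `k : V₁` and `l : V₂`. -/
def bridgeMerge {V₁ V₂ : Type} (G₁ : SimpleGraph V₁) (G₂ : SimpleGraph V₂)
    (k : V₁) (l : V₂) : SimpleGraph (V₁ ⊕ V₂) :=
  SimpleGraph.fromRel (fun x y =>
    match x, y with
    | Sum.inl a, Sum.inl b => G₁.Adj a b
    | Sum.inr a, Sum.inr b => G₂.Adj a b
    | Sum.inl a, Sum.inr b => a = k ∧ b = l
    | _, _ => False)


/-!
Split `α` into its parts `α₁ ⊆ V₁` and `α₂ ⊆ V₂`. A dedicated node of `αᵢ` in `Gᵢ` stays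
dedicated in the merged graph unless it is an endpoint of the bridge whose other endpoint lies
in `α`. If `l ∈ α₂`, a dedicated node of `α₂` is not `l` itself, so it survives; otherwise a
dedicated node of `α₁`, or of `α₂` when `α₁` is empty, survives.
-/

open Finset Sum

def StronglySignControllableOn {V : Type} (G : SimpleGraph V) (S : Finset V) : Prop :=
  ∀ α ⊆ S, α.Nonempty → ∃ v, ded G α v

lemma Finset.image_inl_union_image_inr_sdiff {α β : Type*} [DecidableEq α] [DecidableEq β]
    (s₁ s₂ : Finset α) (t₁ t₂ : Finset β) :
    (s₁.image inl ∪ t₁.image inr) \ (s₂.image inl ∪ t₂.image inr) = (s₁ \ s₂).disjSum (t₁ \ t₂) := by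
  ext (a | b) <;> simp

section BridgeMerge

variable {V₁ V₂ : Type} {G₁ : SimpleGraph V₁} {G₂ : SimpleGraph V₂} {k : V₁} {l : V₂}

@[simp]
lemma bridgeMerge_adj_inl_inl {a b : V₁} :
    (bridgeMerge G₁ G₂ k l).Adj (inl a) (inl b) ↔ G₁.Adj a b := by
  simp only [bridgeMerge, SimpleGraph.fromRel_adj, ne_eq, inl.injEq]
  exact ⟨fun h => h.2.elim id .symm, fun h => ⟨h.ne, .inl h⟩⟩

@[simp]
lemma bridgeMerge_adj_inr_inr {a b : V₂} :
    (bridgeMerge G₁ G₂ k l).Adj (inr a) (inr b) ↔ G₂.Adj a b := by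
  simp only [bridgeMerge, SimpleGraph.fromRel_adj, ne_eq, inr.injEq]
  exact ⟨fun h => h.2.elim id .symm, fun h => ⟨h.ne, .inl h⟩⟩

@[simp]
lemma bridgeMerge_adj_inl_inr {a : V₁} {b : V₂} :
    (bridgeMerge G₁ G₂ k l).Adj (inl a) (inr b) ↔ a = k ∧ b = l := by
  simp [bridgeMerge]

@[simp]
lemma bridgeMerge_adj_inr_inl {a : V₂} {b : V₁} :
    (bridgeMerge G₁ G₂ k l).Adj (inr a) (inl b) ↔ b = k ∧ a = l := by
  simp [bridgeMerge]

lemma filter_bridgeMerge_adj_inl {α : Finset (V₁ ⊕ V₂)} {v : V₁}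
    (h : ¬(v = k ∧ l ∈ α.toRight)) :
    α.filter ((bridgeMerge G₁ G₂ k l).Adj (inl v)) = (α.toLeft.filter (G₁.Adj v)).map .inl := by
  ext (a | b)
  · simp
  · simp only [mem_toRight, not_and] at h
    simp only [mem_filter, bridgeMerge_adj_inl_inr, mem_map, mem_toLeft, Function.Embedding.inl_apply,
      reduceCtorEq, and_false, exists_false, iff_false, not_and]
    rintro hb hvk rfl
    exact h hvk hb


lemma filter_bridgeMerge_adj_inr {α : Finset (V₁ ⊕ V₂)} {v : V₂}
    (h : ¬(v = l ∧ k ∈ α.toLeft)) :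
    α.filter ((bridgeMerge G₁ G₂ k l).Adj (inr v)) = (α.toRight.filter (G₂.Adj v)).map .inr := by
  ext (a | b)
  · simp only [mem_toLeft, not_and] at h
    simp only [mem_filter, bridgeMerge_adj_inr_inl, mem_map, mem_toRight, Function.Embedding.inr_apply,
      reduceCtorEq, and_false, exists_false, iff_false, not_and]
    rintro ha rfl hvl
    exact h hvl ha
  · simp

lemma ded_bridgeMerge_inl {α : Finset (V₁ ⊕ V₂)} {v : V₁} (hv : ded G₁ α.toLeft v)
    (h : ¬(v = k ∧ l ∈ α.toRight)) : ded (bridgeMerge G₁ G₂ k l) α (inl v) :=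
  ⟨mt mem_toLeft.2 hv.1, by rw [filter_bridgeMerge_adj_inl h, card_map, hv.2]⟩

lemma ded_bridgeMerge_inr {α : Finset (V₁ ⊕ V₂)} {v : V₂} (hv : ded G₂ α.toRight v)
    (h : ¬(v = l ∧ k ∈ α.toLeft)) : ded (bridgeMerge G₁ G₂ k l) α (inr v) :=
  ⟨mt mem_toRight.2 hv.1, by rw [filter_bridgeMerge_adj_inr h, card_map, hv.2]⟩

theorem StronglySignControllableOn.bridgeMerge {S₁ : Finset V₁} {S₂ : Finset V₂}
    (h₁ : StronglySignControllableOn G₁ S₁) (h₂ : StronglySignControllableOn G₂ S₂)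
    (k : V₁) (l : V₂) :
    StronglySignControllableOn (bridgeMerge G₁ G₂ k l) (S₁.disjSum S₂) := by
  intro α hα hne
  obtain ⟨hα₁, hα₂⟩ := subset_disjSum.1 hα
  by_cases hl : l ∈ α.toRight
  · obtain ⟨v, hv⟩ := h₂ _ hα₂ ⟨l, hl⟩
    exact ⟨inr v, ded_bridgeMerge_inr hv fun h => hv.1 (h.1 ▸ hl)⟩
  by_cases hne₁ : α.toLeft.Nonempty
  · obtain ⟨v, hv⟩ := h₁ _ hα₁ hne₁
    exact ⟨inl v, ded_bridgeMerge_inl hv fun h => hl h.2⟩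
  · have hne₂ : α.toRight.Nonempty := by
      obtain ⟨a | b, hx⟩ := hne
      · exact absurd ⟨a, mem_toLeft.2 hx⟩ hne₁
      · exact ⟨b, mem_toRight.2 hx⟩
    obtain ⟨v, hv⟩ := h₂ _ hα₂ hne₂
    exact ⟨inr v, ded_bridgeMerge_inr hv fun h => hne₁ ⟨k, h.2⟩⟩

end BridgeMerge

theorem stmt3_general {V₁ V₂ : Type}
    (G₁ : SimpleGraph V₁) (VS₁ VI₁ : Finset V₁)
    (G₂ : SimpleGraph V₂) (VS₂ VI₂ : Finset V₂)
    -- each component is strongly sign controllable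
    (hssc₁ : ∀ α ⊆ VS₁ \ (VS₁.filter (fun v => ∃ u ∈ VI₁, G₁.Adj v u)),
        α.Nonempty → ∃ v, ded G₁ α v)
    (hssc₂ : ∀ α ⊆ VS₂ \ (VS₂.filter (fun v => ∃ u ∈ VI₂, G₂.Adj v u)),
        α.Nonempty → ∃ v, ded G₂ α v)
    -- one bridge edge between state nodes k and l
    (k : V₁) (l : V₂) :
    -- the merged graph is strongly sign controllable
    ∀ α ⊆ ((VS₁.image Sum.inl ∪ VS₂.image Sum.inr : Finset (V₁ ⊕ V₂)) \
          ((VS₁.filter (fun v => ∃ u ∈ VI₁, G₁.Adj v u)).image Sum.inl ∪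
           (VS₂.filter (fun v => ∃ u ∈ VI₂, G₂.Adj v u)).image Sum.inr)),
      α.Nonempty → ∃ v, ded (bridgeMerge G₁ G₂ k l) α v := by
  rw [image_inl_union_image_inr_sdiff]
  exact StronglySignControllableOn.bridgeMerge hssc₁ hssc₂ k l

theorem stmt3 {V₁ V₂ : Type}
    (G₁ : SimpleGraph V₁) (VS₁ VI₁ : Finset V₁)
    (G₂ : SimpleGraph V₂) (VS₂ VI₂ : Finset V₂)
    (hd₁ : Disjoint VS₁ VI₁) (hd₂ : Disjoint VS₂ VI₂)
    -- each input node has exactly one neighbor, a state node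
    (hin₁ : ∀ u ∈ VI₁, ∃ w, w ∈ VS₁ ∧ ∀ x, G₁.Adj u x ↔ x = w)
    (hin₂ : ∀ u ∈ VI₂, ∃ w, w ∈ VS₂ ∧ ∀ x, G₂.Adj u x ↔ x = w)
    -- each component is strongly sign controllable
    (hssc₁ : ∀ α ⊆ VS₁ \ (VS₁.filter (fun v => ∃ u ∈ VI₁, G₁.Adj v u)),
        α.Nonempty → ∃ v, ded G₁ α v)
    (hssc₂ : ∀ α ⊆ VS₂ \ (VS₂.filter (fun v => ∃ u ∈ VI₂, G₂.Adj v u)),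
        α.Nonempty → ∃ v, ded G₂ α v)
    -- one bridge edge between state nodes k and l
    (k : V₁) (hk : k ∈ VS₁) (l : V₂) (hl : l ∈ VS₂) :
    -- the merged graph is strongly sign controllable
    ∀ α ⊆ ((VS₁.image Sum.inl ∪ VS₂.image Sum.inr : Finset (V₁ ⊕ V₂)) \
          ((VS₁.filter (fun v => ∃ u ∈ VI₁, G₁.Adj v u)).image Sum.inl ∪
           (VS₂.filter (fun v => ∃ u ∈ VI₂, G₂.Adj v u)).image Sum.inr)),
      α.Nonempty → ∃ v, ded (bridgeMerge G₁ G₂ k l) α v :=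
  stmt3_general G₁ VS₁ VI₁ G₂ VS₂ VI₂ hssc₁ hssc₂ k l
end

section
/- Let G be a graph on state nodes V_S with input nodes V_I such that each input node has exactly one state-node neighbor. If for every nonempty α ⊆ V_S \ N(V_I) the set N(α)\α contains a dedicated node, then for every nonempty α ⊆ V_S the set N(α)\α contains a dedicated node. (The dedicated-node condition need only be checked on subsets avoiding N(V_I).) -/
open scoped Classical

/-! A set meeting `N(V_I)` has an input node as dedicated node, since an input node is a leaf;
a set avoiding `N(V_I)` is covered by the hypothesis. -/

theorem ded_of_adj_iff_eq {V : Type} {G : SimpleGraph V} {α : Finset V} {u w : V}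
    (hu : u ∉ α) (hw : w ∈ α) (hadj : ∀ x, G.Adj u x ↔ x = w) : ded G α u := by
  refine ⟨hu, Finset.card_eq_one.2 ⟨w, ?_⟩⟩
  ext x
  simp only [Finset.mem_filter, Finset.mem_singleton, hadj, and_iff_right_iff_imp]
  exact fun hx => hx ▸ hw

theorem stmt15_general {V : Type} (G : SimpleGraph V) (VS VI : Finset V)
    (hd : Disjoint VS VI)
    -- each input node has exactly one neighbor, which is a state node
    (hin : ∀ u ∈ VI, ∃ w, w ∈ VS ∧ ∀ x, G.Adj u x ↔ x = w)
    -- the dedicated-node condition holds on subsets avoiding N(V_I)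
    (h : ∀ α ⊆ VS \ (VS.filter (fun v => ∃ u ∈ VI, G.Adj v u)),
        α.Nonempty → ∃ v, ded G α v) :
    -- then it holds for all nonempty subsets of V_S
    ∀ α ⊆ VS, α.Nonempty → ∃ v, ded G α v := by
  intro α hα hne
  by_cases hmeets : ∃ v ∈ α, ∃ u ∈ VI, G.Adj v u
  · obtain ⟨v, hv, u, hu, hvu⟩ := hmeets
    obtain ⟨w, -, hadj⟩ := hin u hu
    have hvw : v = w := (hadj v).1 hvu.symm
    have huα : u ∉ α := fun huα => Finset.disjoint_left.1 hd (hα huα) hu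
    exact ⟨u, ded_of_adj_iff_eq huα (hvw ▸ hv) hadj⟩
  · refine h α (fun x hx => ?_) hne
    simp only [Finset.mem_sdiff, Finset.mem_filter, not_and]
    exact ⟨hα hx, fun _ hxu => hmeets ⟨x, hx, hxu⟩⟩

theorem stmt15 {V : Type} (G : SimpleGraph V) (VS VI : Finset V)
    (hd : Disjoint VS VI)
    -- the state graph is connected
    (hconn : (G.induce (VS : Set V)).Connected)
    -- each input node has exactly one neighbor, which is a state node
    (hin : ∀ u ∈ VI, ∃ w, w ∈ VS ∧ ∀ x, G.Adj u x ↔ x = w)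
    -- the dedicated-node condition holds on subsets avoiding N(V_I)
    (h : ∀ α ⊆ VS \ (VS.filter (fun v => ∃ u ∈ VI, G.Adj v u)),
        α.Nonempty → ∃ v, ded G α v) :
    -- then it holds for all nonempty subsets of V_S
    ∀ α ⊆ VS, α.Nonempty → ∃ v, ded G α v :=
  stmt15_general G VS VI hd hin h
end
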